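/- Fix c ∈ ℂ. Let M = [[0, 1, 0], [0, 0, 1], [−u_0 u_1 (u_2 + c), 0, λ]] and let g = g(u_0,u_1,λ) = [[λ/(u_0 + c), −1/(u_0 + c), 0], [0, λ/(u_0(u_1 + c)), −1/(u_0(u_1 + c))], [1, 0, 0]]. Then det(g) ≠ 0 and S(g)·M·g^{-1} = [[0, u_0, 0], [0, 0, u_0], [−(u_0 + c), 0, λ]]; in particular the gauge-transformed S-part depends only on u_0 and λ. -/

import Mathlib

/-!
Setup: `K1` is the field of rational functions over `ℂ` in the commuting
variables `λ` (here `lam`) and `u_ℓ` (`ℓ : ℤ`), realized as the fraction field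
of the multivariate polynomial ring.  `S1` is the shift automorphism `S`
(fixing `ℂ` and `λ`, sending `u_ℓ` to `u_{ℓ+1}`), and `Sz ℓ = S^ℓ`.
-/

set_option maxHeartbeats 1000000

noncomputable section

open MvPolynomial

abbrev R1 : Type := MvPolynomial (Option ℤ) ℂ
abbrev K1 : Type := FractionRing R1

def lam : K1 := algebraMap R1 K1 (X none)
def u (ℓ : ℤ) : K1 := algebraMap R1 K1 (X (some ℓ))

def shiftR1 : R1 ≃+* R1 :=
  (renameEquiv ℂ (Equiv.optionCongr (Equiv.addRight (1:ℤ)))).toRingEquiv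

/-- The shift automorphism `S` of the field `K1`. -/
def S1 : RingAut K1 := IsFractionRing.ringEquivOfRingEquiv shiftR1

/-- `Sz ℓ = S^ℓ`. -/
def Sz (ℓ : ℤ) : K1 ≃+* K1 := S1 ^ ℓ

/-!
Because `g` is invertible, `S(g)·M·g⁻¹ = N` is equivalent to `S(g)·M = N·g`, which after
clearing the denominators `u_0 + c`, `u_1 + c`, `u_2 + c`, `u_0`, `u_1` is an identity of
rational functions valid over any field. The shift acts on `g(u_0, u_1, λ)` by moving its
arguments, `S(g) = g(u_1, u_2, λ)`, since `S` fixes `λ` and `c`.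
-/

section GaugeAlgebra

variable {F : Type*} [Field F]

def gaugeMatrix (x y l c : F) : Matrix (Fin 3) (Fin 3) F :=
  !![l / (x + c), -(1 / (x + c)), 0;
     0, l / (x * (y + c)), -(1 / (x * (y + c)));
     1, 0, 0]

def sPart (x y z l c : F) : Matrix (Fin 3) (Fin 3) F :=
  !![0, 1, 0; 0, 0, 1; -(x * y * (z + c)), 0, l]

def reducedSPart (x l c : F) : Matrix (Fin 3) (Fin 3) F :=
  !![0, x, 0; 0, 0, x; -(x + c), 0, l]

theorem det_gaugeMatrix (x y l c : F) :
    (gaugeMatrix x y l c).det = 1 / (x + c) * (1 / (x * (y + c))) := by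
  simp [gaugeMatrix, Matrix.det_fin_three]

theorem det_gaugeMatrix_ne_zero {x y c : F} (hx : x ≠ 0) (hxc : x + c ≠ 0) (hyc : y + c ≠ 0)
    (l : F) : (gaugeMatrix x y l c).det ≠ 0 := by
  rw [det_gaugeMatrix]
  exact mul_ne_zero (one_div_ne_zero hxc) (one_div_ne_zero (mul_ne_zero hx hyc))

theorem gaugeMatrix_map {E : Type*} [Field E] (σ : F →+* E) (x y l c : F) :
    (gaugeMatrix x y l c).map σ = gaugeMatrix (σ x) (σ y) (σ l) (σ c) := by
  ext i j
  fin_cases i <;> fin_cases j <;> simp [gaugeMatrix, map_div₀]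

theorem gaugeMatrix_mul_sPart {x y z c : F} (hx : x ≠ 0) (hy : y ≠ 0) (hxc : x + c ≠ 0)
    (hzc : z + c ≠ 0) (l : F) :
    gaugeMatrix y z l c * sPart x y z l c = reducedSPart x l c * gaugeMatrix x y l c := by
  ext i j
  fin_cases i <;> fin_cases j <;>
    simp [gaugeMatrix, sPart, reducedSPart, Matrix.mul_apply, Fin.sum_univ_three] <;>
    field_simp <;> ring

theorem gaugeMatrix_sPart_mul_inv {x y z c : F} (hx : x ≠ 0) (hy : y ≠ 0) (hxc : x + c ≠ 0)
    (hyc : y + c ≠ 0) (hzc : z + c ≠ 0) (l : F) :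
    gaugeMatrix y z l c * sPart x y z l c * (gaugeMatrix x y l c)⁻¹ = reducedSPart x l c := by
  have := Matrix.invertibleOfIsUnitDet _ (det_gaugeMatrix_ne_zero hx hxc hyc l).isUnit
  rw [Matrix.mul_inv_eq_iff_eq_mul_of_invertible]
  exact gaugeMatrix_mul_sPart hx hy hxc hzc l

end GaugeAlgebra

theorem MvPolynomial.X_add_C_ne_zero {σ R : Type*} [CommRing R] [Nontrivial R] (s : σ) (r : R) :
    (X s + C r : MvPolynomial σ R) ≠ 0 := by
  intro h
  simpa using congrArg (eval fun _ => 1 - r) h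

theorem u_ne_zero (ℓ : ℤ) : u ℓ ≠ 0 :=
  (map_ne_zero_iff _ (IsFractionRing.injective R1 K1)).mpr (X_ne_zero _)

theorem u_add_algebraMap_ne_zero (ℓ : ℤ) (c : ℂ) : u ℓ + algebraMap ℂ K1 c ≠ 0 := by
  rw [u, IsScalarTower.algebraMap_apply ℂ R1 K1, ← map_add]
  exact (map_ne_zero_iff _ (IsFractionRing.injective R1 K1)).mpr (X_add_C_ne_zero _ c)

theorem S1_algebraMap (r : R1) : S1 (algebraMap R1 K1 r) = algebraMap R1 K1 (shiftR1 r) :=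
  IsFractionRing.ringEquivOfRingEquiv_algebraMap shiftR1 r

theorem S1_u (ℓ : ℤ) : S1 (u ℓ) = u (ℓ + 1) := by
  simp [u, S1_algebraMap, shiftR1]

theorem S1_lam : S1 lam = lam := by
  simp [lam, S1_algebraMap, shiftR1]

theorem S1_algebraMap_complex (c : ℂ) : S1 (algebraMap ℂ K1 c) = algebraMap ℂ K1 c := by
  simp [IsScalarTower.algebraMap_apply ℂ R1 K1, S1_algebraMap, shiftR1]

/-- the gauge transformation `g = g(u_0,u_1,λ)` below is
invertible and transforms the S-part
`M = [[0,1,0],[0,0,1],[−u_0 u_1 (u_2+c),0,λ]]` into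
`S(g)·M·g⁻¹ = [[0,u_0,0],[0,0,u_0],[−(u_0+c),0,λ]]`, which depends only on
`u_0` and `λ`. -/
theorem statement14 (c : ℂ) :
    (!![lam / (u 0 + algebraMap ℂ K1 c), -(1 / (u 0 + algebraMap ℂ K1 c)), 0;
        0, lam / (u 0 * (u 1 + algebraMap ℂ K1 c)),
          -(1 / (u 0 * (u 1 + algebraMap ℂ K1 c)));
        1, 0, 0] : Matrix (Fin 3) (Fin 3) K1).det ≠ 0 ∧
    (!![lam / (u 0 + algebraMap ℂ K1 c), -(1 / (u 0 + algebraMap ℂ K1 c)), 0;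
        0, lam / (u 0 * (u 1 + algebraMap ℂ K1 c)),
          -(1 / (u 0 * (u 1 + algebraMap ℂ K1 c)));
        1, 0, 0] : Matrix (Fin 3) (Fin 3) K1).map ⇑(Sz 1) *
      !![0, 1, 0; 0, 0, 1; -(u 0 * u 1 * (u 2 + algebraMap ℂ K1 c)), 0, lam] *
      (!![lam / (u 0 + algebraMap ℂ K1 c), -(1 / (u 0 + algebraMap ℂ K1 c)), 0;
          0, lam / (u 0 * (u 1 + algebraMap ℂ K1 c)),
            -(1 / (u 0 * (u 1 + algebraMap ℂ K1 c)));
          1, 0, 0] : Matrix (Fin 3) (Fin 3) K1)⁻¹ =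
    !![0, u 0, 0; 0, 0, u 0; -(u 0 + algebraMap ℂ K1 c), 0, lam] := by
  set a := algebraMap ℂ K1 c
  change (gaugeMatrix (u 0) (u 1) lam a).det ≠ 0 ∧
    (gaugeMatrix (u 0) (u 1) lam a).map ⇑(Sz 1) * sPart (u 0) (u 1) (u 2) lam a *
      (gaugeMatrix (u 0) (u 1) lam a)⁻¹ = reducedSPart (u 0) lam a
  have hx := u_ne_zero 0
  have hxc := u_add_algebraMap_ne_zero 0 c
  have hyc := u_add_algebraMap_ne_zero 1 c
  have hshift : (gaugeMatrix (u 0) (u 1) lam a).map ⇑(Sz 1) = gaugeMatrix (u 1) (u 2) lam a := by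
    rw [Sz, zpow_one, ← RingEquiv.coe_toRingHom, gaugeMatrix_map]
    simp only [RingEquiv.coe_toRingHom, S1_u, S1_lam, a, S1_algebraMap_complex]
    norm_num
  rw [hshift]
  exact ⟨det_gaugeMatrix_ne_zero hx hxc hyc lam,
    gaugeMatrix_sPart_mul_inv hx (u_ne_zero 1) hxc hyc (u_add_algebraMap_ne_zero 2 c) lam⟩
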